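/- arXiv:2205.15635 — 6 statements merged into one kernel-verified Lean document; each statement's English description precedes it below -/
import Mathlib

section
/- Let h₊ and h₋ be n×n complex matrices with h₋ invertible, let H = Matrix.fromBlocks 0 h₊ h₋ 0, and suppose ψ₀ ∈ ℂⁿ is nonzero with h₊ *ᵥ ψ₀ = 0. Let Ψ² ∈ ℂⁿ ⊕ ℂⁿ have first block h₋⁻¹ *ᵥ ψ₀ and second block 0, and let Ψ¹ = H *ᵥ Ψ². Then H *ᵥ (H *ᵥ Ψ²) = 0 while H *ᵥ Ψ² ≠ 0, and the vectors Ψ¹ and Ψ² are linearly independent over ℂ; that is, H possesses a nontrivial 2×2 Jordan block with eigenvalue 0 (an exceptional point). -/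
open Matrix

/-- For the block Hamiltonian `H = fromBlocks 0 h₊ h₋ 0` with `h₋` invertible
and `ψ₀ ≠ 0` with `h₊ *ᵥ ψ₀ = 0`, the vector `Ψ²` with blocks `(h₋⁻¹ *ᵥ ψ₀, 0)` generates a
nontrivial `2×2` Jordan block of `H` with eigenvalue `0`: setting `Ψ¹ = H *ᵥ Ψ²`, we have
`H *ᵥ Ψ¹ = 0`, `Ψ¹ ≠ 0`, and `Ψ¹, Ψ²` are linearly independent over `ℂ` (an exceptional
point). -/
theorem block_hamiltonian_exceptional_point
    {n : ℕ} (hp hm : Matrix (Fin n) (Fin n) ℂ) (hminv : IsUnit hm)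
    (H : Matrix (Fin n ⊕ Fin n) (Fin n ⊕ Fin n) ℂ)
    (hH : H = Matrix.fromBlocks 0 hp hm 0)
    (ψ₀ : Fin n → ℂ) (hψ₀ne : ψ₀ ≠ 0) (hψ₀ : hp *ᵥ ψ₀ = 0)
    (Psi2 : Fin n ⊕ Fin n → ℂ)
    (hPsi2 : Psi2 = Sum.elim (hm⁻¹ *ᵥ ψ₀) (0 : Fin n → ℂ)) :
    H *ᵥ (H *ᵥ Psi2) = 0 ∧ H *ᵥ Psi2 ≠ 0 ∧
      LinearIndependent ℂ ![H *ᵥ Psi2, Psi2] := by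
  have hmul : hm *ᵥ (hm⁻¹ *ᵥ ψ₀) = ψ₀ := by
    rw [Matrix.mulVec_mulVec, Matrix.mul_nonsing_inv _ ((Matrix.isUnit_iff_isUnit_det hm).mp hminv), Matrix.one_mulVec]
  have h1 : H *ᵥ Psi2 = Sum.elim (0 : Fin n → ℂ) ψ₀ := by
    rw [hH, hPsi2, Matrix.fromBlocks_mulVec]
    simp [hmul]
  have h2 : H *ᵥ (H *ᵥ Psi2) = 0 := by
    rw [h1, hH, Matrix.fromBlocks_mulVec]
    simp [hψ₀]
  have hinvne : hm⁻¹ *ᵥ ψ₀ ≠ 0 := by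
    intro h
    apply hψ₀ne
    rw [← hmul, h, Matrix.mulVec_zero]
  refine ⟨h2, ?_, ?_⟩
  · rw [h1]
    intro h
    apply hψ₀ne
    funext i
    exact congrFun h (Sum.inr i)
  · subst hPsi2
    rw [h1]
    refine LinearIndependent.pair_iff.mpr fun a b hab => ?_
    obtain ⟨i, hi⟩ := Function.ne_iff.mp hψ₀ne
    obtain ⟨j, hj⟩ := Function.ne_iff.mp hinvne
    have ha := congrFun hab (Sum.inr i)
    have hb := congrFun hab (Sum.inl j)
    simp at ha hb hi hj
    exact ⟨ha.resolve_right hi, hb.resolve_right hj⟩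
end

section
/- For every (kx, ky, kz) ∈ ℝ³, the determinant of the exceptional topological insulator Hamiltonian satisfies det(H_ETI(kx,ky,kz)) = −((sin kx)² + (sin ky)² + (sin kz)² + (2 − cos kx − cos ky − cos kz)²), and this determinant is nonzero; in particular H_ETI has a point gap at the reference energy E = 0, i.e., H_ETI(k) is invertible for all k. -/
open Matrix Complex

/-- The Pauli matrix σx. -/
def pauliX : Matrix (Fin 2) (Fin 2) ℂ := !![0, 1; 1, 0]

/-- The Pauli matrix σy. -/
def pauliY : Matrix (Fin 2) (Fin 2) ℂ := !![0, -Complex.I; Complex.I, 0]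

/-- The Pauli matrix σz. -/
def pauliZ : Matrix (Fin 2) (Fin 2) ℂ := !![1, 0; 0, -1]

/-- The exceptional topological insulator Hamiltonian
`H_ETI(k) = sin kx · σx + sin kz · σy + (2 − cos kx − cos ky − cos kz) · σz − i·sin ky · σ0`. -/
noncomputable def H_ETI (kx ky kz : ℝ) : Matrix (Fin 2) (Fin 2) ℂ :=
  (Real.sin kx : ℂ) • pauliX + (Real.sin kz : ℂ) • pauliY +
    ((2 - Real.cos kx - Real.cos ky - Real.cos kz : ℝ) : ℂ) • pauliZ -
    (Complex.I * (Real.sin ky : ℂ)) • (1 : Matrix (Fin 2) (Fin 2) ℂ)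

lemma key_ne (kx ky kz : ℝ) :
    (Real.sin kx) ^ 2 + (Real.sin ky) ^ 2 + (Real.sin kz) ^ 2 +
      (2 - Real.cos kx - Real.cos ky - Real.cos kz) ^ 2 ≠ 0 := by
  intro h
  have hx : Real.sin kx = 0 := by nlinarith [sq_nonneg (Real.sin kx), sq_nonneg (Real.sin ky), sq_nonneg (Real.sin kz), sq_nonneg (2 - Real.cos kx - Real.cos ky - Real.cos kz)]
  have hy : Real.sin ky = 0 := by nlinarith [sq_nonneg (Real.sin kx), sq_nonneg (Real.sin ky), sq_nonneg (Real.sin kz), sq_nonneg (2 - Real.cos kx - Real.cos ky - Real.cos kz)]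
  have hz : Real.sin kz = 0 := by nlinarith [sq_nonneg (Real.sin kx), sq_nonneg (Real.sin ky), sq_nonneg (Real.sin kz), sq_nonneg (2 - Real.cos kx - Real.cos ky - Real.cos kz)]
  have hw : 2 - Real.cos kx - Real.cos ky - Real.cos kz = 0 := by nlinarith [sq_nonneg (Real.sin kx), sq_nonneg (Real.sin ky), sq_nonneg (Real.sin kz), sq_nonneg (2 - Real.cos kx - Real.cos ky - Real.cos kz)]
  have pm : ∀ t : ℝ, Real.sin t = 0 → Real.cos t = 1 ∨ Real.cos t = -1 := by
    intro t ht
    have h1 := Real.sin_sq_add_cos_sq t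
    rw [ht] at h1
    have : (Real.cos t - 1) * (Real.cos t + 1) = 0 := by nlinarith
    rcases mul_eq_zero.mp this with h | h
    · left; linarith
    · right; linarith
  rcases pm kx hx with h1 | h1 <;> rcases pm ky hy with h2 | h2 <;>
    rcases pm kz hz with h3 | h3 <;> linarith

/-- For every `(kx, ky, kz) ∈ ℝ³`, the determinant of the exceptional
topological insulator Hamiltonian equals
`−((sin kx)² + (sin ky)² + (sin kz)² + (2 − cos kx − cos ky − cos kz)²)`, which is nonzero;
in particular `H_ETI` has a point gap at `E = 0`, i.e., `H_ETI(k)` is invertible for all `k`. -/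
theorem H_ETI_det_and_point_gap (kx ky kz : ℝ) :
    (H_ETI kx ky kz).det =
      -(((Real.sin kx) ^ 2 + (Real.sin ky) ^ 2 + (Real.sin kz) ^ 2 +
          (2 - Real.cos kx - Real.cos ky - Real.cos kz) ^ 2 : ℝ) : ℂ) ∧
    (H_ETI kx ky kz).det ≠ 0 ∧ IsUnit (H_ETI kx ky kz) := by
  have hdet : (H_ETI kx ky kz).det =
      -(((Real.sin kx) ^ 2 + (Real.sin ky) ^ 2 + (Real.sin kz) ^ 2 +
          (2 - Real.cos kx - Real.cos ky - Real.cos kz) ^ 2 : ℝ) : ℂ) := by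
    simp [H_ETI, pauliX, pauliY, pauliZ, Matrix.det_fin_two, Matrix.one_apply]
    ring_nf
    simp only [Complex.I_sq]
    ring
  have hne : (H_ETI kx ky kz).det ≠ 0 := by
    rw [hdet]
    simp only [ne_eq, neg_eq_zero, Complex.ofReal_eq_zero]
    exact key_ne kx ky kz
  exact ⟨hdet, hne, (Matrix.isUnit_iff_isUnit_det _).mpr (isUnit_iff_ne_zero.mpr hne)⟩
end

section
/- Let v > 0 and r > 0 be real numbers and define f : ℝ → ℂ by f(θ) = v·r·cos θ − i·r·sin θ, the restriction of the surface effective Hamiltonian h_surface(kx, ky) = v·kx − i·ky to the counterclockwise circle of radius r around the origin of the surface Brillouin zone. Then f(θ) ≠ 0 for all θ, and ∫₀^{2π} (deriv f θ) / f(θ) dθ = −2πi; equivalently, the 1D winding number w₁ = −(1/(2πi)) ∫₀^{2π} f(θ)⁻¹ · (deriv f θ) dθ of the surface state around its Fermi point equals 1. -/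
/-!
Multiplying the loop `f θ = v r cos θ - i r sin θ` by `e^{iθ}` gives a loop whose real part
`v r cos² θ + r sin² θ` is positive. A loop in the right half-plane has a single-valued
logarithm, so its logarithmic derivative integrates to zero over a period; since
`f'/f = (f e^{iθ})'/(f e^{iθ}) - i`, the integral of `f'/f` is `-2πi`.
-/

open Real Complex intervalIntegral

@[fun_prop]
theorem Complex.contDiff_ofReal {n : WithTop ℕ∞} : ContDiff ℝ n ((↑) : ℝ → ℂ) :=
  ofRealCLM.contDiff

theorem ContDiff.continuous_deriv_div {u : ℝ → ℂ} (hu : ContDiff ℝ 1 u)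
    (hne : ∀ t, u t ≠ 0) : Continuous fun t => deriv u t / u t :=
  (hu.continuous_deriv le_rfl).div hu.continuous hne

theorem integral_deriv_div_eq_log_sub_log {u : ℝ → ℂ} {a b : ℝ} (hu : ContDiff ℝ 1 u)
    (hslit : ∀ t, u t ∈ slitPlane) :
    ∫ t in a..b, deriv u t / u t = log (u b) - log (u a) := by
  refine integral_eq_sub_of_hasDerivAt
    (fun t _ => (hu.differentiable one_ne_zero t).hasDerivAt.clog_real (hslit t)) ?_
  exact (hu.continuous_deriv_div fun t => slitPlane_ne_zero (hslit t)).intervalIntegrable _ _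

theorem integral_deriv_div_eq_neg_two_pi_mul_I {f : ℝ → ℂ} (hf : ContDiff ℝ 1 f)
    (hperiodic : f (2 * π) = f 0) (hslit : ∀ θ, f θ * exp (θ * I) ∈ slitPlane) :
    ∫ θ in (0 : ℝ)..(2 * π), deriv f θ / f θ = -(2 * π * I) := by
  set u : ℝ → ℂ := fun θ => f θ * exp (θ * I)
  have hu : ContDiff ℝ 1 u := hf.mul (by fun_prop)
  have hf_ne : ∀ θ, f θ ≠ 0 := fun θ => left_ne_zero_of_mul (slitPlane_ne_zero (hslit θ))
  have hlogDeriv : ∀ θ, deriv f θ / f θ = deriv u θ / u θ - I := by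
    intro θ
    have hexp : HasDerivAt (fun t : ℝ => exp (t * I)) (exp (θ * I) * I) θ := by
      simpa using ((hasDerivAt_id (θ : ℂ)).mul_const I).cexp.comp_ofReal
    have hu' : HasDerivAt u (deriv f θ * exp (θ * I) + f θ * (exp (θ * I) * I)) θ :=
      (hf.differentiable one_ne_zero θ).hasDerivAt.mul hexp
    rw [hu'.deriv]
    simp only [u]
    field_simp [hf_ne θ, Complex.exp_ne_zero]
    ring
  have hu_periodic : u (2 * π) = u 0 := by
    simp only [u, hperiodic]
    rw [show ((2 * π : ℝ) : ℂ) * I = 2 * π * I by push_cast; ring, exp_two_pi_mul_I]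
    simp
  have hint : IntervalIntegrable (fun θ => deriv u θ / u θ) MeasureTheory.volume 0 (2 * π) :=
    (hu.continuous_deriv_div fun t => slitPlane_ne_zero (hslit t)).intervalIntegrable _ _
  simp only [hlogDeriv]
  rw [integral_sub hint intervalIntegrable_const, integral_deriv_div_eq_log_sub_log hu hslit,
    hu_periodic]
  simp

theorem re_ellipse_mul_exp_pos {a b : ℝ} (ha : 0 < a) (hb : 0 < b) (θ : ℝ) :
    0 < ((((a * Real.cos θ : ℝ) : ℂ) - I * ((b * Real.sin θ : ℝ) : ℂ)) *
      exp (θ * I)).re := by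
  have hre : ((((a * Real.cos θ : ℝ) : ℂ) - I * ((b * Real.sin θ : ℝ) : ℂ)) *
      exp (θ * I)).re = a * Real.cos θ ^ 2 + b * Real.sin θ ^ 2 := by
    simp only [ofReal_mul, ofReal_cos, ofReal_sin, mul_re, sub_re, ofReal_re, cos_ofReal_re,
      ofReal_im, cos_ofReal_im, mul_zero, sub_zero, I_re, sin_ofReal_re, sin_ofReal_im, zero_mul,
      I_im, mul_im, add_zero, sub_self, exp_ofReal_mul_I_re, sub_im, one_mul, zero_add, zero_sub,
      exp_ofReal_mul_I_im, neg_mul, sub_neg_eq_add]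
    ring
  rw [hre]
  rcases (sq_nonneg (Real.cos θ)).eq_or_lt with hcos | hcos
  · nlinarith [Real.sin_sq_add_cos_sq θ]
  · nlinarith [sq_nonneg (Real.sin θ)]

/-- For `v, r > 0`, the restriction `f(θ) = v·r·cos θ − i·r·sin θ` of the
surface effective Hamiltonian `h_surface(kx, ky) = v·kx − i·ky` to the counterclockwise circle
of radius `r` around the origin is nowhere zero, and
`∫₀^{2π} f'(θ)/f(θ) dθ = −2πi`; equivalently, the 1D winding number
`w₁ = −(1/(2πi)) ∫₀^{2π} f(θ)⁻¹ · f'(θ) dθ` equals `1`. -/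
theorem surface_state_winding_number_one
    (v r : ℝ) (hv : 0 < v) (hr : 0 < r) (f : ℝ → ℂ)
    (hf : ∀ θ : ℝ, f θ = ((v * r * Real.cos θ : ℝ) : ℂ) - Complex.I * ((r * Real.sin θ : ℝ) : ℂ)) :
    (∀ θ : ℝ, f θ ≠ 0) ∧
    (∫ θ in (0 : ℝ)..(2 * Real.pi), deriv f θ / f θ) = -(2 * Real.pi * Complex.I) ∧
    -(1 / (2 * Real.pi * Complex.I)) *
      (∫ θ in (0 : ℝ)..(2 * Real.pi), (f θ)⁻¹ * deriv f θ) = 1 := by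
  have hslit : ∀ θ : ℝ, f θ * exp (θ * I) ∈ slitPlane := fun θ => by
    rw [hf]
    exact Or.inl (re_ellipse_mul_exp_pos (mul_pos hv hr) hr θ)
  have hsmooth : ContDiff ℝ 1 f := by
    rw [funext hf]
    fun_prop
  have hwinding := integral_deriv_div_eq_neg_two_pi_mul_I hsmooth (by simp [hf]) hslit
  refine ⟨fun θ => left_ne_zero_of_mul (slitPlane_ne_zero (hslit θ)), hwinding, ?_⟩
  simp_rw [inv_mul_eq_div, hwinding]
  field_simp [ofReal_ne_zero.2 pi_ne_zero]
end

section
/- Let C be a unitary n×n complex matrix, E ∈ ℂ, and let H : ℝ³ → Matrix (Fin n) (Fin n) ℂ satisfy the time-reversal symmetry TRS† of the AZ† classes: C · (H k)ᵀ · C⁻¹ = H(−k) for all k. Define the doubled Hamiltonian H̃(k) = Matrix.fromBlocks 0 (H(k) − E·1) ((H(k))ᴴ − conj(E)·1) 0 and C̃ = Matrix.fromBlocks 0 C C 0. Then C̃ · conj(H̃ k) · C̃⁻¹ = H̃(−k) for all k, and C̃ · conj(C̃) = Matrix.fromBlocks (C · conj C) 0 0 (C · conj C); in particular, if C · conj(C)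 = −1 (class AII†), then C̃ · conj(C̃) = −1, so the doubled Hermitian Hamiltonian acquires a time-reversal symmetry squaring to −1 (class DIII). -/
/-!
Conjugating by the antidiagonal `C̃ = fromBlocks 0 C C 0` swaps the two off-diagonal blocks of
`conj H̃(k)` and conjugates each of them by `C`. The block `H(k)ᵀ − E` is carried to
`H(−k) − E` by TRS† itself; the block `conj H(k) − conj E` is carried to `H(−k)ᴴ − conj E`
by the conjugate transpose of TRS†, which reads `C · conj H(k) · Cᴴ = H(−k)ᴴ` for unitary `C`.
The scalar shifts survive because conjugation by a unitary fixes multiples of `1`.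
-/

open Matrix

namespace Matrix

variable {m n R : Type*}

theorem fromBlocks_antidiag_mul_self [Fintype n] [NonUnitalNonAssocSemiring R]
    (C D : Matrix n n R) :
    fromBlocks 0 C C 0 * fromBlocks 0 D D 0 = fromBlocks (C * D) 0 0 (C * D) := by
  simp [fromBlocks_multiply]

theorem fromBlocks_antidiag_mul_mul [Fintype n] [NonUnitalNonAssocSemiring R]
    (C D X Y : Matrix n n R) :
    fromBlocks 0 C C 0 * fromBlocks 0 X Y 0 * fromBlocks 0 D D 0 =
      fromBlocks 0 (C * Y * D) (C * X * D) 0 := by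
  simp [fromBlocks_multiply]

theorem map_starRingEnd_conjTranspose [CommSemiring R] [StarRing R] (A : Matrix m n R) :
    Aᴴ.map (starRingEnd R) = Aᵀ := by
  ext; simp [starRingEnd_apply]

theorem map_starRingEnd_sub_smul_one [DecidableEq n] [CommRing R] [StarRing R]
    (A : Matrix n n R) (e : R) :
    (A - e • 1).map (starRingEnd R) = A.map (starRingEnd R) - starRingEnd R e • 1 := by
  ext i j; by_cases h : i = j <;> simp [h]

theorem mul_sub_smul_one_mul_of_mul_eq_one [Fintype n] [DecidableEq n] [CommRing R]
    {C D : Matrix n n R} (h : C * D = 1) (A : Matrix n n R) (e : R) :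
    C * (A - e • 1) * D = C * A * D - e • 1 := by
  rw [mul_sub, sub_mul, Matrix.mul_smul, mul_one, Matrix.smul_mul, h]

theorem conjTranspose_mul_transpose_mul_conjTranspose [Fintype n] [CommSemiring R] [StarRing R]
    (C : Matrix m n R) (A : Matrix n n R) :
    (C * Aᵀ * Cᴴ)ᴴ = C * A.map (starRingEnd R) * Cᴴ := by
  rw [conjTranspose_mul, conjTranspose_mul, conjTranspose_conjTranspose, ← Matrix.mul_assoc,
    transpose_conjTranspose]
  rfl

end Matrix

theorem doubled_hamiltonian_TRS_dagger_general
    {n : ℕ} (C : Matrix (Fin n) (Fin n) ℂ)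
    (hC1 : C * Cᴴ = 1) (E : ℂ)
    (H : (Fin 3 → ℝ) → Matrix (Fin n) (Fin n) ℂ)
    (hTRS : ∀ k, C * (H k)ᵀ * C⁻¹ = H (-k))
    (Htil : (Fin 3 → ℝ) → Matrix (Fin n ⊕ Fin n) (Fin n ⊕ Fin n) ℂ)
    (hHtil : ∀ k, Htil k =
      Matrix.fromBlocks 0 (H k - E • 1) ((H k)ᴴ - (starRingEnd ℂ E) • 1) 0)
    (Ctil : Matrix (Fin n ⊕ Fin n) (Fin n ⊕ Fin n) ℂ)
    (hCtil : Ctil = Matrix.fromBlocks 0 C C 0) :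
    (∀ k, Ctil * (Htil k).map (starRingEnd ℂ) * Ctil⁻¹ = Htil (-k)) ∧
    Ctil * Ctil.map (starRingEnd ℂ) =
      Matrix.fromBlocks (C * C.map (starRingEnd ℂ)) 0 0 (C * C.map (starRingEnd ℂ)) ∧
    (C * C.map (starRingEnd ℂ) = -1 → Ctil * Ctil.map (starRingEnd ℂ) = -1) := by
  have hCtil_inv : Ctil⁻¹ = fromBlocks 0 Cᴴ Cᴴ 0 :=
    inv_eq_right_inv (by rw [hCtil, fromBlocks_antidiag_mul_self, hC1, fromBlocks_one])
  have hCtil_sq : Ctil * Ctil.map (starRingEnd ℂ) =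
      fromBlocks (C * C.map (starRingEnd ℂ)) 0 0 (C * C.map (starRingEnd ℂ)) := by
    rw [hCtil, fromBlocks_map, Matrix.map_zero _ (map_zero _), fromBlocks_antidiag_mul_self]
  refine ⟨fun k => ?_, hCtil_sq, fun h => ?_⟩
  · have hT : C * (H k)ᵀ * Cᴴ = H (-k) := inv_eq_right_inv hC1 ▸ hTRS k
    have hT_conj : C * (H k).map (starRingEnd ℂ) * Cᴴ = (H (-k))ᴴ := by
      rw [← hT, conjTranspose_mul_transpose_mul_conjTranspose]
    have hHtil_conj : (Htil k).map (starRingEnd ℂ) =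
        fromBlocks 0 ((H k).map (starRingEnd ℂ) - starRingEnd ℂ E • 1) ((H k)ᵀ - E • 1) 0 := by
      rw [hHtil, fromBlocks_map, Matrix.map_zero _ (map_zero _), map_starRingEnd_sub_smul_one,
        map_starRingEnd_sub_smul_one, map_starRingEnd_conjTranspose, Complex.conj_conj]
    rw [hHtil_conj, hCtil_inv, hCtil, fromBlocks_antidiag_mul_mul,
      mul_sub_smul_one_mul_of_mul_eq_one hC1, mul_sub_smul_one_mul_of_mul_eq_one hC1,
      hT, hT_conj, hHtil]
  · rw [hCtil_sq, h, ← fromBlocks_one, fromBlocks_neg, neg_zero]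

/-- Let `C` be unitary and let `H : ℝ³ → Matrix (Fin n) (Fin n) ℂ` satisfy
TRS†: `C · (H k)ᵀ · C⁻¹ = H(−k)`. With the doubled Hamiltonian
`H̃(k) = fromBlocks 0 (H k − E•1) ((H k)ᴴ − conj(E)•1) 0` and `C̃ = fromBlocks 0 C C 0`, one has
`C̃ · conj(H̃ k) · C̃⁻¹ = H̃(−k)` for all `k`, and
`C̃ · conj(C̃) = fromBlocks (C·conj C) 0 0 (C·conj C)`; in particular, if `C·conj C = −1`
(class AII†) then `C̃ · conj(C̃) = −1` (class DIII). -/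
theorem doubled_hamiltonian_TRS_dagger
    {n : ℕ} (C : Matrix (Fin n) (Fin n) ℂ)
    (hC1 : C * Cᴴ = 1) (hC2 : Cᴴ * C = 1) (E : ℂ)
    (H : (Fin 3 → ℝ) → Matrix (Fin n) (Fin n) ℂ)
    (hTRS : ∀ k, C * (H k)ᵀ * C⁻¹ = H (-k))
    (Htil : (Fin 3 → ℝ) → Matrix (Fin n ⊕ Fin n) (Fin n ⊕ Fin n) ℂ)
    (hHtil : ∀ k, Htil k =
      Matrix.fromBlocks 0 (H k - E • 1) ((H k)ᴴ - (starRingEnd ℂ E) • 1) 0)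
    (Ctil : Matrix (Fin n ⊕ Fin n) (Fin n ⊕ Fin n) ℂ)
    (hCtil : Ctil = Matrix.fromBlocks 0 C C 0) :
    (∀ k, Ctil * (Htil k).map (starRingEnd ℂ) * Ctil⁻¹ = Htil (-k)) ∧
    Ctil * Ctil.map (starRingEnd ℂ) =
      Matrix.fromBlocks (C * C.map (starRingEnd ℂ)) 0 0 (C * C.map (starRingEnd ℂ)) ∧
    (C * C.map (starRingEnd ℂ) = -1 → Ctil * Ctil.map (starRingEnd ℂ) = -1) :=
  doubled_hamiltonian_TRS_dagger_general C hC1 E H hTRS Htil hHtil Ctil hCtil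
end

section
/- Let Γ₀, …, Γ_{d−1} be Hermitian n×n complex matrices that pairwise anticommute and square to the identity, and let Γ_d be a Hermitian n×n matrix with Γ_d² = 1 that commutes with every Γᵢ (i < d). Define the doubled matrices Γ̃ᵢ = Matrix.fromBlocks 0 Γᵢ Γᵢ 0 for i < d and Γ̃_d = Matrix.fromBlocks 0 (i•Γ_d) (−i•Γ_d) 0. Then the d+1 matrices Γ̃₀, …, Γ̃_d pairwise anticommute, each squares to the 2n×2n identity, and each is Hermitian. Moreover, for any real coefficients a₀, …, a_d, the non-Hermitian matrix H = Σ_{μ<d} a_μ • Γ_μ + (i·a_d) • Γ_d satisfies Matrix.fromBlocks 0 H Hᴴ 0 = Σ_{μ<d} a_μ • Γ̃_μ + a_d • Γ̃_d, so the doubled Hamiltonian of the minimal model is a massive Dirac Hamiltonian. -/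
open Matrix

/-- Let `Γ₀, …, Γ_{d−1}` be Hermitian, pairwise anticommuting matrices squaring
to the identity, and let `Γ_d` be Hermitian with `Γ_d² = 1`, commuting with every `Γᵢ`. Then the
doubled matrices `Γ̃ᵢ = fromBlocks 0 Γᵢ Γᵢ 0` and `Γ̃_d = fromBlocks 0 (i•Γ_d) (−i•Γ_d) 0`
pairwise anticommute, each squares to the identity and is Hermitian, and for real coefficients
`a₀, …, a_d` the non-Hermitian matrix `H = Σ_{μ<d} a_μ • Γ_μ + (i·a_d) • Γ_d` has doubled
Hermitian Hamiltonian `fromBlocks 0 H Hᴴ 0 = Σ_{μ<d} a_μ • Γ̃_μ + a_d • Γ̃_d`: a massive Dirac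
Hamiltonian. -/
theorem doubled_minimal_model_is_dirac
    {n d : ℕ} (Γ : Fin d → Matrix (Fin n) (Fin n) ℂ) (Γd : Matrix (Fin n) (Fin n) ℂ)
    (hherm : ∀ i, (Γ i)ᴴ = Γ i)
    (hanti : ∀ i j, i ≠ j → Γ i * Γ j + Γ j * Γ i = 0)
    (hsq : ∀ i, Γ i * Γ i = 1)
    (hdherm : Γdᴴ = Γd) (hdsq : Γd * Γd = 1)
    (hcomm : ∀ i, Γ i * Γd = Γd * Γ i)
    (tG : Fin d → Matrix (Fin n ⊕ Fin n) (Fin n ⊕ Fin n) ℂ)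
    (htG : ∀ i, tG i = Matrix.fromBlocks 0 (Γ i) (Γ i) 0)
    (tGd : Matrix (Fin n ⊕ Fin n) (Fin n ⊕ Fin n) ℂ)
    (htGd : tGd = Matrix.fromBlocks 0 (Complex.I • Γd) (-(Complex.I • Γd)) 0) :
    (∀ i j, i ≠ j → tG i * tG j + tG j * tG i = 0) ∧
    (∀ i, tG i * tGd + tGd * tG i = 0) ∧
    (∀ i, tG i * tG i = 1) ∧ tGd * tGd = 1 ∧
    (∀ i, (tG i)ᴴ = tG i) ∧ tGdᴴ = tGd ∧
    ∀ (a : Fin d → ℝ) (ad : ℝ),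
      Matrix.fromBlocks 0
          (∑ i, (a i : ℂ) • Γ i + (Complex.I * (ad : ℂ)) • Γd)
          ((∑ i, (a i : ℂ) • Γ i + (Complex.I * (ad : ℂ)) • Γd)ᴴ) 0 =
        ∑ i, (a i : ℂ) • tG i + (ad : ℂ) • tGd := by
  refine ⟨?_, ?_, ?_, ?_, ?_, ?_, ?_⟩
  · intro i j hij
    have h := hanti i j hij
    simp only [htG, Matrix.fromBlocks_multiply, Matrix.mul_zero, Matrix.zero_mul,
      add_zero, zero_add, Matrix.fromBlocks_add, h]
    simp [← Matrix.fromBlocks_zero]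
  · intro i
    have h := hcomm i
    simp only [htG, htGd, Matrix.fromBlocks_multiply, Matrix.mul_zero, Matrix.zero_mul,
      add_zero, zero_add, Matrix.fromBlocks_add]
    rw [← Matrix.fromBlocks_zero (m := Fin n) (n := Fin n) (l := Fin n) (o := Fin n) (α := ℂ)]
    congr 1 <;> simp [Matrix.mul_smul, Matrix.smul_mul, h]
  · intro i
    simp only [htG, Matrix.fromBlocks_multiply, Matrix.mul_zero, Matrix.zero_mul,
      add_zero, zero_add, hsq]
    simp [← Matrix.fromBlocks_one]
  · simp only [htGd, Matrix.fromBlocks_multiply, Matrix.mul_zero, Matrix.zero_mul,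
      add_zero, zero_add]
    rw [← Matrix.fromBlocks_one (l := Fin n) (m := Fin n) (α := ℂ)]
    congr 1 <;>
      simp [Matrix.mul_smul, Matrix.smul_mul, smul_smul, Complex.I_mul_I, hdsq]
  · intro i
    simp [htG, Matrix.fromBlocks_conjTranspose, hherm]
  · simp [htGd, Matrix.fromBlocks_conjTranspose, hdherm, Complex.conj_I]
  · intro a ad
    have hH : (∑ i, (a i : ℂ) • Γ i + (Complex.I * (ad : ℂ)) • Γd)ᴴ
        = ∑ i, (a i : ℂ) • Γ i + (-(Complex.I * (ad : ℂ))) • Γd := by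
      simp [Matrix.conjTranspose_add, Matrix.conjTranspose_sum, Matrix.conjTranspose_smul,
        hherm, hdherm, Complex.conj_I, Complex.conj_ofReal]
    rw [hH]
    ext x y
    cases x <;> cases y <;>
      simp [htG, htGd, Matrix.fromBlocks, Matrix.sum_apply, Matrix.add_apply,
        Matrix.smul_apply, smul_smul, mul_comm, mul_assoc, mul_left_comm, neg_mul]
end

section
/- Let h₊, h₋ : ℝᵈ → Matrix (Fin n) (Fin n) ℂ be families of matrices, H(k) = Matrix.fromBlocks 0 (h₊ k) (h₋ k) 0, and let T₀, C₀ be invertible n×n complex matrices. Set T = Matrix.fromBlocks T₀ 0 0 T₀ (commuting with S = fromBlocks 1 0 0 (−1)) and C = Matrix.fromBlocks 0 C₀ C₀ 0 (anticommuting with S). Then: (i) the time-reversal symmetry ∀k, T · conj(H k) · T⁻¹ = H(−k) holds if and only if ∀k, T₀ · conj(h₊ k) · T₀⁻¹ = h₊(−k) and T₀ · conj(h₋ k) · T₀⁻¹ = h₋(−k); and (ii) the particle-hole symmetry ∀k, C · (H k)ᵀ · C⁻¹ = −H(−k) holds if and only if ∀k, C₀ · (h₊ k)ᵀ · C₀⁻¹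 = −h₊(−k) and C₀ · (h₋ k)ᵀ · C₀⁻¹ = −h₋(−k). Hence in AZ classes with sublattice symmetry of type S_{+−}, the blocks h₊ and h₋ are independent and each belongs to the same AZ class as H. -/
open Matrix

/-- For `H(k) = fromBlocks 0 (h₊ k) (h₋ k) 0` with
`T = fromBlocks T₀ 0 0 T₀` (commuting with `S`) and `C = fromBlocks 0 C₀ C₀ 0` (anticommuting
with `S`): (i) TRS `T·conj(H k)·T⁻¹ = H(−k)` for all `k` holds iff both blocks satisfy
`T₀·conj(h± k)·T₀⁻¹ = h±(−k)`; and (ii) PHS `C·(H k)ᵀ·C⁻¹ = −H(−k)` for all `k` holds iff both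
blocks satisfy `C₀·(h± k)ᵀ·C₀⁻¹ = −h±(−k)`. Hence in AZ classes with sublattice symmetry of type
`S₊₋`, the blocks `h₊` and `h₋` are independent and each belongs to the same AZ class as `H`. -/
theorem sublattice_Spm_block_symmetries
    {n d : ℕ} (hp hm : (Fin d → ℝ) → Matrix (Fin n) (Fin n) ℂ)
    (H : (Fin d → ℝ) → Matrix (Fin n ⊕ Fin n) (Fin n ⊕ Fin n) ℂ)
    (hH : ∀ k, H k = Matrix.fromBlocks 0 (hp k) (hm k) 0)
    (T₀ C₀ : Matrix (Fin n) (Fin n) ℂ) (hT₀ : IsUnit T₀) (hC₀ : IsUnit C₀)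
    (T C : Matrix (Fin n ⊕ Fin n) (Fin n ⊕ Fin n) ℂ)
    (hT : T = Matrix.fromBlocks T₀ 0 0 T₀)
    (hC : C = Matrix.fromBlocks 0 C₀ C₀ 0) :
    ((∀ k, T * (H k).map (starRingEnd ℂ) * T⁻¹ = H (-k)) ↔
      ((∀ k, T₀ * (hp k).map (starRingEnd ℂ) * T₀⁻¹ = hp (-k)) ∧
        (∀ k, T₀ * (hm k).map (starRingEnd ℂ) * T₀⁻¹ = hm (-k)))) ∧
    ((∀ k, C * (H k)ᵀ * C⁻¹ = -H (-k)) ↔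
      ((∀ k, C₀ * (hp k)ᵀ * C₀⁻¹ = -hp (-k)) ∧
        (∀ k, C₀ * (hm k)ᵀ * C₀⁻¹ = -hm (-k)))) := by
  have hTinv : T⁻¹ = Matrix.fromBlocks T₀⁻¹ 0 0 T₀⁻¹ := by
    apply inv_eq_right_inv
    rw [hT, Matrix.fromBlocks_multiply]
    rw [Matrix.mul_nonsing_inv _ ((Matrix.isUnit_iff_isUnit_det _).mp hT₀)]
    simp [Matrix.fromBlocks_one]
  have hCinv : C⁻¹ = Matrix.fromBlocks 0 C₀⁻¹ C₀⁻¹ 0 := by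
    apply inv_eq_right_inv
    rw [hC, Matrix.fromBlocks_multiply]
    rw [Matrix.mul_nonsing_inv _ ((Matrix.isUnit_iff_isUnit_det _).mp hC₀)]
    simp [← Matrix.fromBlocks_one]
  constructor
  · constructor
    · intro h
      constructor <;> intro k <;>
      · have := h k
        rw [hH, hH, hTinv, hT, Matrix.fromBlocks_map, Matrix.fromBlocks_multiply,
          Matrix.fromBlocks_multiply] at this
        simp only [Matrix.map_zero _ (map_zero _), Matrix.mul_zero, Matrix.zero_mul,
          add_zero, zero_add, Matrix.fromBlocks_inj] at this
        tauto
    · rintro ⟨h1, h2⟩ k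
      rw [hH, hH, hTinv, hT, Matrix.fromBlocks_map, Matrix.fromBlocks_multiply,
        Matrix.fromBlocks_multiply]
      simp only [Matrix.map_zero _ (map_zero _), Matrix.mul_zero, Matrix.zero_mul,
        add_zero, zero_add, h1 k, h2 k]
  · constructor
    · intro h
      constructor <;> intro k <;>
      · have := h k
        rw [hH, hH, hCinv, hC, Matrix.fromBlocks_transpose, Matrix.fromBlocks_multiply,
          Matrix.fromBlocks_multiply, Matrix.fromBlocks_neg] at this
        simp only [Matrix.transpose_zero, Matrix.mul_zero, Matrix.zero_mul,
          add_zero, zero_add, neg_zero, Matrix.fromBlocks_inj] at this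
        tauto
    · rintro ⟨h1, h2⟩ k
      rw [hH, hH, hCinv, hC, Matrix.fromBlocks_transpose, Matrix.fromBlocks_multiply,
        Matrix.fromBlocks_multiply, Matrix.fromBlocks_neg]
      simp only [Matrix.transpose_zero, Matrix.mul_zero, Matrix.zero_mul,
        add_zero, zero_add, neg_zero, h1 k, h2 k]
end
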